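/- arXiv:2009.08683 — 3 statements merged into one kernel-verified Lean document; each statement's English description precedes it below -/
import Mathlib

section
/- Let f(z) = Σ_{n=0}^∞ a_n z^n be analytic in the unit disk 𝔻 with |f(z)| < 1 for all z ∈ 𝔻. Then for all r with 0 ≤ r ≤ 1/3, the majorant series satisfies Σ_{n=0}^∞ |a_n| r^n ≤ 1. -/
/-!
The key input is Wiener's coefficient bound `‖aₙ‖ ≤ 1 - ‖a₀‖²` for `n ≥ 1`. Averaging `f` over the
`n`-th roots of unity shows that `F(w) = ∑ₘ a_{nm} wᵐ` is again a holomorphic self-map of the disk,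
with `F(0) = a₀` and `F'(0) = aₙ`, and the Schwarz–Pick inequality `‖F'(0)‖ ≤ 1 - ‖F(0)‖²` applies.
With `α = ‖a₀‖` and `r ≤ 1/3`, so that `r / (1 - r) ≤ 1/2`, summing gives
`∑ ‖aₙ‖ rⁿ ≤ α + (1 - α²) / 2 = 1 - (1 - α)² / 2 ≤ 1`.
-/

open Complex Metric Finset Set

open scoped ComplexConjugate NNReal

noncomputable def diskInvolution (A w : ℂ) : ℂ := (A - w) / (1 - conj A * w)

theorem one_sub_conj_mul_ne_zero {A w : ℂ} (hA : ‖A‖ < 1) (hw : ‖w‖ < 1) :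
    1 - conj A * w ≠ 0 := by
  refine sub_ne_zero.2 fun h => ?_
  have : ‖conj A * w‖ < 1 := by
    rw [norm_mul, norm_conj]
    exact mul_lt_one_of_nonneg_of_lt_one_left (norm_nonneg A) hA hw.le
  rw [← h, norm_one] at this
  exact this.false

theorem norm_diskInvolution_lt_one {A w : ℂ} (hA : ‖A‖ < 1) (hw : ‖w‖ < 1) :
    ‖diskInvolution A w‖ < 1 := by
  have hden := norm_pos_iff.2 (one_sub_conj_mul_ne_zero hA hw)
  rw [diskInvolution, norm_div, div_lt_one hden]
  refine lt_of_pow_lt_pow_left₀ 2 hden.le ?_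
  have hgap : ‖1 - conj A * w‖ ^ 2 - ‖A - w‖ ^ 2 = (1 - ‖A‖ ^ 2) * (1 - ‖w‖ ^ 2) := by
    simp only [Complex.sq_norm, normSq_apply, sub_re, one_re, mul_re, conj_re, conj_im, sub_im,
      one_im, mul_im]
    ring
  have hA2 : ‖A‖ ^ 2 < 1 := pow_lt_one₀ (norm_nonneg A) hA two_ne_zero
  have hw2 : ‖w‖ ^ 2 < 1 := pow_lt_one₀ (norm_nonneg w) hw two_ne_zero
  nlinarith

theorem diskInvolution_self (A : ℂ) : diskInvolution A A = 0 := by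
  simp [diskInvolution]

theorem differentiableOn_diskInvolution {A : ℂ} (hA : ‖A‖ < 1) :
    DifferentiableOn ℂ (diskInvolution A) (ball 0 1) := fun _ hw =>
  ((differentiableWithinAt_const A).sub differentiableWithinAt_id).div
    ((differentiableWithinAt_const 1).sub (differentiableWithinAt_id.const_mul _))
    (one_sub_conj_mul_ne_zero hA (mem_ball_zero_iff.1 hw))

theorem hasDerivAt_diskInvolution_self {A : ℂ} (hA : ‖A‖ < 1) :
    HasDerivAt (diskInvolution A) (-((1 - ‖A‖ ^ 2 : ℝ) : ℂ)⁻¹) A := by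
  have hden := one_sub_conj_mul_ne_zero hA hA
  have hderiv := ((hasDerivAt_id A).const_sub A).div
    (((hasDerivAt_id A).const_mul (conj A)).const_sub 1) hden
  have hconj : conj A * A = ((‖A‖ ^ 2 : ℝ) : ℂ) := by
    rw [mul_comm, mul_conj, ← Complex.sq_norm, ofReal_pow]
  simp only [id, mul_one] at hderiv
  rw [hconj] at hden hderiv
  refine HasDerivAt.congr_deriv (f := diskInvolution A) hderiv ?_
  rw [sub_self, zero_mul, sub_zero, ofReal_sub, ofReal_one]
  field_simp

theorem norm_deriv_le_one_sub_sq_of_mapsTo_ball {g : ℂ → ℂ} {c : ℂ}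
    (hd : DifferentiableOn ℂ g (ball c 1)) (hmaps : MapsTo g (ball c 1) (ball 0 1)) :
    ‖deriv g c‖ ≤ 1 - ‖g c‖ ^ 2 := by
  set A := g c
  have hA : ‖A‖ < 1 := mem_ball_zero_iff.1 (hmaps (mem_ball_self one_pos))
  have hGd : DifferentiableOn ℂ (diskInvolution A ∘ g) (ball c 1) :=
    (differentiableOn_diskInvolution hA).comp hd hmaps
  have hGmaps : MapsTo (diskInvolution A ∘ g) (ball c 1)
      (closedBall ((diskInvolution A ∘ g) c) 1) := fun z hz => by
    rw [Function.comp_apply, diskInvolution_self, mem_closedBall_zero_iff, Function.comp_apply]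
    exact (norm_diskInvolution_lt_one hA (mem_ball_zero_iff.1 (hmaps hz))).le
  have hGderiv := (hasDerivAt_diskInvolution_self hA).comp c
    (hd.differentiableAt (ball_mem_nhds c one_pos)).hasDerivAt
  have hschwarz := norm_deriv_le_one_of_mapsTo_ball hGd hGmaps one_pos
  have hpos : 0 < 1 - ‖A‖ ^ 2 := sub_pos.2 (pow_lt_one₀ (norm_nonneg A) hA two_ne_zero)
  rwa [hGderiv.deriv, norm_mul, norm_neg, norm_inv, norm_real, Real.norm_of_nonneg hpos.le,
    inv_mul_le_iff₀ hpos, mul_one] at hschwarz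

theorem IsPrimitiveRoot.sum_pow_pow_eq_ite {R : Type*} [CommRing R] [IsDomain R] {ζ : R} {n : ℕ}
    (hζ : IsPrimitiveRoot ζ n) (j : ℕ) :
    ∑ k ∈ range n, (ζ ^ k) ^ j = if n ∣ j then (n : R) else 0 := by
  simp_rw [pow_right_comm ζ _ j]
  split_ifs with hj
  · simp [(hζ.pow_eq_one_iff_dvd j).2 hj]
  · have hne : ζ ^ j - 1 ≠ 0 := sub_ne_zero.2 (mt (hζ.pow_eq_one_iff_dvd j).1 hj)
    have hgeom := mul_geom_sum (ζ ^ j) n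
    rw [pow_right_comm, hζ.pow_eq_one, one_pow, sub_self] at hgeom
    exact (mul_eq_zero.1 hgeom).resolve_left hne

theorem IsPrimitiveRoot.hasSum_coeff_mul_mul_pow {K : Type*} [Field K] [CharZero K]
    [TopologicalSpace K] [IsTopologicalRing K] {ζ z : K} {n : ℕ} (hζ : IsPrimitiveRoot ζ n)
    (hn : n ≠ 0) {a : ℕ → K} {s : ℕ → K}
    (h : ∀ k ∈ range n, HasSum (fun j => a j * (ζ ^ k * z) ^ j) (s k)) :
    HasSum (fun m => a (n * m) * (z ^ n) ^ m) ((n : K)⁻¹ * ∑ k ∈ range n, s k) := by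
  have hfilter : ∀ j, (n : K)⁻¹ * ∑ k ∈ range n, a j * (ζ ^ k * z) ^ j
      = if n ∣ j then a j * z ^ j else 0 := by
    intro j
    simp_rw [mul_pow, ← mul_sum, ← sum_mul, hζ.sum_pow_pow_eq_ite]
    split_ifs
    · field_simp
    · simp
  have hsum := (hasSum_sum h).mul_left (n : K)⁻¹
  simp only [hfilter] at hsum
  have hcomp : (fun m => a (n * m) * (z ^ n) ^ m)
      = (fun j => if n ∣ j then a j * z ^ j else 0) ∘ (n * ·) := by
    ext m
    simp [pow_mul]
  rw [hcomp]
  refine ((mul_right_injective₀ hn).hasSum_iff fun j hj => ?_).2 hsum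
  rw [if_neg (mt (fun ⟨m, hm⟩ => ⟨m, hm.symm⟩) hj)]

theorem norm_inv_natCast_mul_sum_lt {𝕜 : Type*} [RCLike 𝕜] {n : ℕ} (hn : n ≠ 0) {x : ℕ → 𝕜}
    {R : ℝ} (hx : ∀ k ∈ range n, ‖x k‖ < R) : ‖(n : 𝕜)⁻¹ * ∑ k ∈ range n, x k‖ < R := by
  have hn' : (0 : ℝ) < n := by positivity
  calc ‖(n : 𝕜)⁻¹ * ∑ k ∈ range n, x k‖ ≤ (n : ℝ)⁻¹ * ∑ k ∈ range n, ‖x k‖ := by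
        rw [norm_mul, norm_inv, RCLike.norm_natCast]
        gcongr
        exact norm_sum_le _ _
    _ < (n : ℝ)⁻¹ * ∑ k ∈ range n, R := by
        gcongr with k hk
        · exact nonempty_range_iff.2 hn
        · exact hx k hk
    _ = R := by
        rw [sum_const, card_range, nsmul_eq_mul, inv_mul_cancel_left₀ hn'.ne']

theorem FormalMultilinearSeries.hasFPowerSeriesOnBall_ofScalars_of_hasSum
    {𝕜 : Type*} [RCLike 𝕜] {c : ℕ → 𝕜} {g : 𝕜 → 𝕜} {R : ℝ≥0} (hR : 0 < R)
    (h : ∀ z ∈ ball (0 : 𝕜) R, HasSum (fun n => c n * z ^ n) (g z)) :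
    HasFPowerSeriesOnBall g (ofScalars 𝕜 c) 0 R := by
  refine ⟨?_, by exact_mod_cast hR, fun {y} hy => ?_⟩
  · refine ENNReal.le_of_forall_nnreal_lt fun ρ hρ => le_radius_of_tendsto _ (l := 0) ?_
    have hρR : ((ρ : ℝ) : 𝕜) ∈ ball (0 : 𝕜) R := by
      rw [mem_ball_zero_iff, RCLike.norm_ofReal, abs_of_nonneg ρ.coe_nonneg]
      exact_mod_cast hρ
    simpa [ofScalars_norm, abs_of_nonneg ρ.coe_nonneg] using
      (h _ hρR).summable.tendsto_atTop_zero.norm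
  · rw [eball_coe] at hy
    simpa only [ofScalars_apply_eq, smul_eq_mul, zero_add] using h y hy

theorem norm_coeff_le_one_sub_sq {a : ℕ → ℂ} {f : ℂ → ℂ}
    (hf : ∀ z ∈ ball (0 : ℂ) 1, HasSum (fun n => a n * z ^ n) (f z))
    (hb : ∀ z ∈ ball (0 : ℂ) 1, ‖f z‖ < 1) {n : ℕ} (hn : n ≠ 0) :
    ‖a n‖ ≤ 1 - ‖a 0‖ ^ 2 := by
  obtain ⟨ζ, hζ⟩ : ∃ ζ : ℂ, IsPrimitiveRoot ζ n := ⟨_, isPrimitiveRoot_exp n hn⟩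
  have hsection : ∀ w ∈ ball (0 : ℂ) 1,
      ∃ s, HasSum (fun m => a (n * m) * w ^ m) s ∧ ‖s‖ < 1 := by
    intro w hw
    obtain ⟨z, rfl⟩ := IsAlgClosed.exists_pow_nat_eq w (Nat.pos_of_ne_zero hn)
    have hz : ∀ k, ζ ^ k * z ∈ ball (0 : ℂ) 1 := fun k => by
      rw [mem_ball_zero_iff, norm_mul, norm_pow, hζ.norm'_eq_one hn, one_pow, one_mul,
        ← pow_lt_one_iff_of_nonneg (norm_nonneg z) hn, ← norm_pow, ← mem_ball_zero_iff]
      exact hw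
    exact ⟨_, hζ.hasSum_coeff_mul_mul_pow hn fun k _ => hf _ (hz k),
      norm_inv_natCast_mul_sum_lt hn fun k _ => hb _ (hz k)⟩
  choose! F hF using hsection
  have hps : HasFPowerSeriesOnBall F
      (FormalMultilinearSeries.ofScalars ℂ fun m => a (n * m)) 0 1 :=
    FormalMultilinearSeries.hasFPowerSeriesOnBall_ofScalars_of_hasSum one_pos
      (by simpa using fun z hz => (hF z hz).1)
  have hF0 : F 0 = a 0 := by simpa using (hps.coeff_zero fun _ => 0).symm
  have hF' : deriv F 0 = a n := by simpa using hps.hasFPowerSeriesAt.deriv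
  have hFd : DifferentiableOn ℂ F (ball 0 1) := by
    simpa only [← ENNReal.coe_one, eball_coe, NNReal.coe_one] using hps.differentiableOn
  simpa [hF0, hF'] using norm_deriv_le_one_sub_sq_of_mapsTo_ball hFd
    fun z hz => mem_ball_zero_iff.2 (hF z hz).2

theorem tsum_mul_pow_le {c : ℕ → ℝ} {B r : ℝ} (hc : ∀ n, 0 ≤ c n) (hcB : ∀ n ≠ 0, c n ≤ B)
    (hr0 : 0 ≤ r) (hr1 : r < 1) : ∑' n, c n * r ^ n ≤ c 0 + B * (r / (1 - r)) := by
  have hgeom := summable_geometric_of_lt_one hr0 hr1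
  have hsum : Summable fun n => c n * r ^ n := by
    refine .of_nonneg_of_le (fun n => mul_nonneg (hc n) (pow_nonneg hr0 n)) (fun n => ?_)
      (hgeom.mul_left (max (c 0) B))
    gcongr
    rcases eq_or_ne n 0 with rfl | hn
    exacts [le_max_left _ _, (hcB n hn).trans (le_max_right _ _)]
  have htail : Summable fun n => c (n + 1) * r ^ (n + 1) :=
    hsum.comp_injective (add_left_injective 1)
  have hgeom_tail : Summable fun n => B * r ^ (n + 1) :=
    (hgeom.mul_left B).comp_injective (add_left_injective 1)
  rw [hsum.tsum_eq_zero_add, pow_zero, mul_one]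
  refine add_le_add_right ?_ (c 0)
  calc ∑' n, c (n + 1) * r ^ (n + 1) ≤ ∑' n, B * r ^ (n + 1) :=
        htail.tsum_le_tsum (fun n => by gcongr; exact hcB _ n.succ_ne_zero) hgeom_tail
    _ = B * (r / (1 - r)) := by
        simp_rw [pow_succ', ← mul_assoc, tsum_mul_left, tsum_geometric_of_lt_one hr0 hr1,
          div_eq_mul_inv, mul_assoc]

/-- Bohr's inequality: if `f(z) = Σ aₙ zⁿ` on the unit disk with `|f| < 1`,
then `Σ |aₙ| rⁿ ≤ 1` for `0 ≤ r ≤ 1/3`. -/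
theorem bohr_inequality (a : ℕ → ℂ) (f : ℂ → ℂ)
    (hf : ∀ z ∈ Metric.ball (0 : ℂ) 1, HasSum (fun n => a n * z ^ n) (f z))
    (hb : ∀ z ∈ Metric.ball (0 : ℂ) 1, ‖f z‖ < 1)
    (r : ℝ) (hr0 : 0 ≤ r) (hr : r ≤ 1 / 3) :
    ∑' n : ℕ, ‖a n‖ * r ^ n ≤ 1 := by
  have hcoeff : ∀ n ≠ 0, ‖a n‖ ≤ 1 - ‖a 0‖ ^ 2 := fun n hn => norm_coeff_le_one_sub_sq hf hb hn
  have hB : 0 ≤ 1 - ‖a 0‖ ^ 2 := (norm_nonneg _).trans (hcoeff 1 one_ne_zero)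
  have hr' : r / (1 - r) ≤ 1 / 2 := by
    rw [div_le_iff₀ (by linarith)]
    linarith
  calc ∑' n, ‖a n‖ * r ^ n ≤ ‖a 0‖ + (1 - ‖a 0‖ ^ 2) * (r / (1 - r)) :=
        tsum_mul_pow_le (fun n => norm_nonneg _) hcoeff hr0 (by linarith)
    _ ≤ ‖a 0‖ + (1 - ‖a 0‖ ^ 2) * (1 / 2) := by gcongr
    _ ≤ 1 := by nlinarith [sq_nonneg (1 - ‖a 0‖)]
end

section
/- Let h, g be analytic on 𝔻 with g'(z) = α z h'(z) for all z ∈ 𝔻, where |α| ≤ 1, and suppose K'(-|z|) ≤ |h'(z)| ≤ K'(|z|) for a fixed function K : (-1,1) → ℝ differentiable with K' > 0. Then for the harmonic map f = h + conj(g) and |z| = r < 1, one has |f(z)| ≤ K(r) - K(0) + |α| ∫₀^r t K'(t) dt, where the upper bound is obtained by integrating |h'| + |g'| along the segment from 0 to z. -/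
/-!
Integrate `h'` and `g'` along the radius `[0, z]`: on it `|h'(ζ)| ≤ K'(|ζ|)` and
`|g'(ζ)| = |α| |ζ| |h'(ζ)| ≤ |α| |ζ| K'(|ζ|)`, so `|f(z)| ≤ |h(z)| + |g(z)|` is bounded by
`∫₀^r K' + |α| ∫₀^r t K'(t) dt`. Since `K' > 0`, `K'` is integrable on `[0, r]` and
`∫₀^r K' = K(r) - K(0)`.
-/

open Complex Metric intervalIntegral

theorem norm_sub_le_integral_of_norm_deriv_le_on_segment {E : Type*} [NormedAddCommGroup E]
    [NormedSpace ℂ E] {f : ℂ → E} {U : Set ℂ} (hU : IsOpen U) (hf : DifferentiableOn ℂ f U)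
    {z : ℂ} (hzU : segment ℝ 0 z ⊆ U) {φ : ℝ → ℝ}
    (hφ : IntervalIntegrable φ MeasureTheory.volume 0 ‖z‖)
    (hle : ∀ w ∈ segment ℝ 0 z, ‖deriv f w‖ ≤ φ ‖w‖) :
    ‖f z - f 0‖ ≤ ∫ s in (0 : ℝ)..‖z‖, φ s := by
  rcases eq_or_ne z 0 with rfl | hz
  · simp
  have hz' : 0 < ‖z‖ := norm_pos_iff.2 hz
  set γ : ℝ → ℂ := fun s => (s / ‖z‖ : ℝ) • z
  have hγ_mem : ∀ s ∈ Set.Icc 0 ‖z‖, γ s ∈ segment ℝ 0 z := fun s hs =>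
    ⟨1 - s / ‖z‖, s / ‖z‖, sub_nonneg.2 ((div_le_one hz').2 hs.2), div_nonneg hs.1 hz'.le,
      by ring, by simp [γ]⟩
  have hγ_norm : ∀ s ∈ Set.Icc 0 ‖z‖, ‖γ s‖ = s := fun s hs => by
    rw [norm_smul, Real.norm_of_nonneg (div_nonneg hs.1 hz'.le), div_mul_cancel₀ _ hz'.ne']
  have hγ_deriv : ∀ s, HasDerivAt γ ((1 / ‖z‖ : ℝ) • z) s := fun s => by
    simpa [γ, div_eq_mul_inv, mul_comm] using ((hasDerivAt_id s).div_const ‖z‖).smul_const z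
  have hfγ : ∀ s ∈ Set.Icc 0 ‖z‖,
      HasDerivAt (f ∘ γ) (((1 / ‖z‖ : ℝ) • z) • deriv f (γ s)) s := fun s hs =>
    ((hf.differentiableAt (hU.mem_nhds (hzU (hγ_mem s hs)))).hasDerivAt).scomp s (hγ_deriv s)
  have key := norm_sub_le_integral_of_norm_deriv_le_of_le hz'.le
    (fun s hs => (hfγ s hs).continuousAt.continuousWithinAt)
    (fun s hs => (hfγ s (Set.Ioo_subset_Icc_self hs)).differentiableAt.differentiableWithinAt)
    (MeasureTheory.ae_of_all _ fun s hs => by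
      have hs' := Set.Ioo_subset_Icc_self hs
      rw [(hfγ s hs').deriv, norm_smul, norm_smul, Real.norm_of_nonneg (by positivity),
        one_div_mul_cancel hz'.ne', one_mul]
      simpa only [hγ_norm s hs'] using hle _ (hγ_mem s hs'))
    hφ
  simpa [γ, hz'.ne'] using key

theorem intervalIntegrable_deriv_of_differentiableAt_of_nonneg {K : ℝ → ℝ} {a b : ℝ}
    (hK : ∀ t ∈ Set.uIcc a b, DifferentiableAt ℝ K t)
    (hpos : ∀ t ∈ Set.uIcc a b, 0 ≤ deriv K t) :
    IntervalIntegrable (deriv K) MeasureTheory.volume a b :=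
  intervalIntegrable_deriv_of_nonneg (fun t ht => (hK t ht).continuousAt.continuousWithinAt)
    (fun t ht => (hK t (Set.Ioo_subset_Icc_self ht)).hasDerivAt)
    (fun t ht => hpos t (Set.Ioo_subset_Icc_self ht))

theorem harmonic_growth_upper_general (h g : ℂ → ℂ) (α : ℂ) (K : ℝ → ℝ)
    (hh : DifferentiableOn ℂ h (ball (0 : ℂ) 1))
    (hg : DifferentiableOn ℂ g (ball (0 : ℂ) 1))
    (h0 : h 0 = 0) (g0 : g 0 = 0)
    (hdil : ∀ z ∈ ball (0 : ℂ) 1, deriv g z = α * z * deriv h z)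
    (hK : ∀ t ∈ Set.Ioo (-1 : ℝ) 1, DifferentiableAt ℝ K t)
    (hKpos : ∀ t ∈ Set.Ioo (-1 : ℝ) 1, 0 < deriv K t)
    (hbound : ∀ z ∈ ball (0 : ℂ) 1,
      deriv K (-‖z‖) ≤ ‖deriv h z‖ ∧
      ‖deriv h z‖ ≤ deriv K (‖z‖))
    (z : ℂ) (hz : z ∈ ball (0 : ℂ) 1) :
    ‖h z + (starRingEnd ℂ) (g z)‖ ≤
      K (‖z‖) - K 0 +
        ‖α‖ * ∫ t in (0 : ℝ)..(‖z‖), t * deriv K t := by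
  have hseg : segment ℝ 0 z ⊆ ball (0 : ℂ) 1 :=
    (convex_ball 0 1).segment_subset (mem_ball_self one_pos) hz
  have hradius : Set.uIcc 0 ‖z‖ ⊆ Set.Ioo (-1 : ℝ) 1 := by
    rw [Set.uIcc_of_le (norm_nonneg z)]
    exact Set.Icc_subset_Ioo (by norm_num) (by simpa using hz)
  have hK'int : IntervalIntegrable (deriv K) MeasureTheory.volume 0 ‖z‖ :=
    intervalIntegrable_deriv_of_differentiableAt_of_nonneg (fun t ht => hK t (hradius ht))
      (fun t ht => (hKpos t (hradius ht)).le)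
  have hh_le : ‖h z‖ ≤ K ‖z‖ - K 0 := by
    rw [← integral_deriv_eq_sub (fun t ht => hK t (hradius ht)) hK'int, ← sub_zero (h z), ← h0]
    exact norm_sub_le_integral_of_norm_deriv_le_on_segment isOpen_ball hh hseg hK'int
      fun w hw => (hbound w (hseg hw)).2
  have hg_le : ‖g z‖ ≤ ‖α‖ * ∫ t in (0 : ℝ)..‖z‖, t * deriv K t := by
    rw [← integral_const_mul, ← sub_zero (g z), ← g0]
    refine norm_sub_le_integral_of_norm_deriv_le_on_segment isOpen_ball hg hseg
      ((hK'int.continuousOn_mul continuousOn_id).const_mul _) fun w hw => ?_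
    rw [hdil w (hseg hw), norm_mul, norm_mul, mul_assoc]
    gcongr
    exact (hbound w (hseg hw)).2
  calc ‖h z + (starRingEnd ℂ) (g z)‖ ≤ ‖h z‖ + ‖g z‖ := by
        simpa only [Complex.norm_conj] using norm_add_le (h z) ((starRingEnd ℂ) (g z))
    _ ≤ _ := add_le_add hh_le hg_le

/-- Growth upper bound for the harmonic map `f = h + conj g` with dilation
`g' = α z h'`, when `K'(-|z|) ≤ |h'(z)| ≤ K'(|z|)`. -/
theorem harmonic_growth_upper (h g : ℂ → ℂ) (α : ℂ) (K : ℝ → ℝ)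
    (hα : ‖α‖ ≤ 1)
    (hh : DifferentiableOn ℂ h (ball (0 : ℂ) 1))
    (hg : DifferentiableOn ℂ g (ball (0 : ℂ) 1))
    (h0 : h 0 = 0) (g0 : g 0 = 0)
    (hdil : ∀ z ∈ ball (0 : ℂ) 1, deriv g z = α * z * deriv h z)
    (hK : ∀ t ∈ Set.Ioo (-1 : ℝ) 1, DifferentiableAt ℝ K t)
    (hKpos : ∀ t ∈ Set.Ioo (-1 : ℝ) 1, 0 < deriv K t)
    (hbound : ∀ z ∈ ball (0 : ℂ) 1,
      deriv K (-‖z‖) ≤ ‖deriv h z‖ ∧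
      ‖deriv h z‖ ≤ deriv K (‖z‖))
    (z : ℂ) (hz : z ∈ ball (0 : ℂ) 1) :
    ‖h z + (starRingEnd ℂ) (g z)‖ ≤
      K (‖z‖) - K 0 +
        ‖α‖ * ∫ t in (0 : ℝ)..(‖z‖), t * deriv K t :=
  harmonic_growth_upper_general h g α K hh hg h0 g0 hdil hK hKpos hbound z hz
end

section
/- Let K' : [0,1) → ℝ be continuous and satisfy K'(t) ≥ c > 0, and suppose h is analytic on 𝔻 with K'(-|z|) ≤ |h'(z)| ≤ K'(|z|) where K' is extended to (-1,1). For f = h + conj(g) with g' = α z h' and |α| ≤ 1, the area S_r of f(𝔻_r) satisfies 2π ∫₀^r t(1-|α|²t²)(K'(-t))² dt ≤ S_r ≤ 2π ∫₀^r t(1-|α|²t²)(K'(t))² dt, where S_r = ∬_{𝔻_r} (|h'(z)|² - |g'(z)|²) dx dy. -/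
open Metric MeasureTheory Real

/-!
Because `g' = α z h'`, the area integrand is `|h'|² - |g'|² = (1 - |α|²|z|²) |h'(z)|²`, a
nonnegative radial weight times `|h'|²`. The two-sided bound `K'(-|z|) ≤ |h'(z)| ≤ K'(|z|)`
(the lower end being positive) therefore squeezes the integrand between two radial functions
`φ(|z|)`, and in polar coordinates `∬_{𝔻_r} φ(|z|) dA = 2π ∫₀^r t φ(t) dt`.
-/

theorem ContinuousOn.integrableOn_ball {X E : Type*} [MetricSpace X] [ProperSpace X]
    [MeasurableSpace X] [OpensMeasurableSpace X] [NormedAddCommGroup E] {μ : Measure X}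
    [IsFiniteMeasureOnCompacts μ] {f : X → E} {x : X} {r : ℝ}
    (hf : ContinuousOn f (closedBall x r)) : IntegrableOn f (ball x r) μ :=
  (hf.integrableOn_compact (isCompact_closedBall x r)).mono_set ball_subset_closedBall

theorem integral_ball_comp_norm {F : Type*} [NormedAddCommGroup F] [NormedSpace ℝ F]
    (f : ℝ → F) {r : ℝ} (hr : 0 ≤ r) :
    ∫ z in ball (0 : ℂ) r, f ‖z‖ = (2 * π) • ∫ t in (0 : ℝ)..r, t • f t := by
  have hball : ball (0 : ℂ) r = norm ⁻¹' Set.Iio r := by ext; simp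
  have hind (z : ℂ) : (norm ⁻¹' Set.Iio r).indicator (fun z : ℂ ↦ f ‖z‖) z =
      (Set.Iio r).indicator f ‖z‖ := Set.indicator_comp_right _
  have hsmul : (fun t : ℝ ↦ t • (Set.Iio r).indicator f t) =
      (Set.Iio r).indicator (fun t ↦ t • f t) := (Set.indicator_smul _ _ _).symm
  rw [← integral_indicator measurableSet_ball, hball]
  simp_rw [hind]
  rw [integral_fun_norm_addHaar volume, Complex.finrank_real_complex]
  simp only [Measure.real, Complex.volume_ball, ENNReal.ofReal_one, one_pow, one_mul,
    ENNReal.coe_toReal, NNReal.coe_real_pi, Nat.reduceSub, pow_one]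
  rw [hsmul, setIntegral_indicator measurableSet_Iio, Set.Ioi_inter_Iio,
    intervalIntegral.integral_of_le hr, integral_Ioc_eq_integral_Ioo, mul_smul]
  exact (ofNat_smul_eq_nsmul ℝ 2 _).symm

section RadialComparison

variable {u : ℂ → ℝ} {φ : ℝ → ℝ} {r : ℝ}

theorem integral_ball_le_of_le_comp_norm (hr : 0 ≤ r) (hu : IntegrableOn u (ball 0 r))
    (hφ : ContinuousOn φ (Set.Icc 0 r)) (h : ∀ z ∈ ball (0 : ℂ) r, u z ≤ φ ‖z‖) :
    ∫ z in ball (0 : ℂ) r, u z ≤ 2 * π * ∫ t in (0 : ℝ)..r, t * φ t := by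
  have hφ_norm : ContinuousOn (fun z : ℂ ↦ φ ‖z‖) (closedBall 0 r) :=
    hφ.comp continuous_norm.continuousOn fun z hz ↦ ⟨norm_nonneg z, mem_closedBall_zero_iff.1 hz⟩
  calc ∫ z in ball (0 : ℂ) r, u z ≤ ∫ z in ball (0 : ℂ) r, φ ‖z‖ :=
        setIntegral_mono_on hu hφ_norm.integrableOn_ball measurableSet_ball h
    _ = 2 * π * ∫ t in (0 : ℝ)..r, t * φ t := integral_ball_comp_norm φ hr

theorem le_integral_ball_of_comp_norm_le (hr : 0 ≤ r) (hu : IntegrableOn u (ball 0 r))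
    (hφ : ∀ t ∈ Set.Ico 0 r, 0 ≤ φ t) (h : ∀ z ∈ ball (0 : ℂ) r, φ ‖z‖ ≤ u z) :
    2 * π * ∫ t in (0 : ℝ)..r, t * φ t ≤ ∫ z in ball (0 : ℂ) r, u z := by
  have hφ_norm : ∀ z ∈ ball (0 : ℂ) r, 0 ≤ φ ‖z‖ :=
    fun z hz ↦ hφ _ ⟨norm_nonneg z, mem_ball_zero_iff.1 hz⟩
  calc 2 * π * ∫ t in (0 : ℝ)..r, t * φ t = ∫ z in ball (0 : ℂ) r, φ ‖z‖ :=
        (integral_ball_comp_norm φ hr).symm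
    _ ≤ ∫ z in ball (0 : ℂ) r, u z :=
        integral_mono_of_nonneg (ae_restrict_of_forall_mem measurableSet_ball hφ_norm) hu
          (ae_restrict_of_forall_mem measurableSet_ball h)

end RadialComparison

theorem norm_sq_sub_norm_sq_of_eq_mul {𝕜 : Type*} [NormedDivisionRing 𝕜] {a b α z : 𝕜}
    (h : b = α * z * a) : ‖a‖ ^ 2 - ‖b‖ ^ 2 = (1 - ‖α‖ ^ 2 * ‖z‖ ^ 2) * ‖a‖ ^ 2 := by
  rw [h, norm_mul, norm_mul]
  ring

theorem one_sub_norm_sq_mul_sq_nonneg {𝕜 : Type*} [NormedField 𝕜] {α : 𝕜} {t : ℝ}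
    (hα : ‖α‖ ≤ 1) (ht0 : 0 ≤ t) (ht1 : t ≤ 1) : 0 ≤ 1 - ‖α‖ ^ 2 * t ^ 2 :=
  sub_nonneg.2 (mul_le_one₀ (pow_le_one₀ (norm_nonneg α) hα) (sq_nonneg t) (pow_le_one₀ ht0 ht1))

section Dilation

variable {h g : ℂ → ℂ} {α : ℂ}

theorem norm_deriv_sq_sub_norm_deriv_sq_eq
    (hdil : ∀ z ∈ ball (0 : ℂ) 1, deriv g z = α * z * deriv h z) {z : ℂ} (hz : z ∈ ball 0 1) :
    ‖deriv h z‖ ^ 2 - ‖deriv g z‖ ^ 2 = (1 - ‖α‖ ^ 2 * ‖z‖ ^ 2) * ‖deriv h z‖ ^ 2 :=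
  norm_sq_sub_norm_sq_of_eq_mul (hdil z hz)

theorem integrableOn_ball_norm_deriv_sq_sub_norm_deriv_sq (hh : DifferentiableOn ℂ h (ball 0 1))
    (hdil : ∀ z ∈ ball (0 : ℂ) 1, deriv g z = α * z * deriv h z) {r : ℝ} (hr : r < 1) :
    IntegrableOn (fun z ↦ ‖deriv h z‖ ^ 2 - ‖deriv g z‖ ^ 2) (ball 0 r) := by
  have hh' : ContinuousOn (deriv h) (closedBall 0 r) :=
    (hh.analyticOnNhd isOpen_ball).deriv.continuousOn.mono (closedBall_subset_ball hr)
  refine IntegrableOn.congr_fun ?_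
    (fun z hz ↦ (norm_deriv_sq_sub_norm_deriv_sq_eq hdil (ball_subset_ball hr.le hz)).symm)
    measurableSet_ball
  exact ((by fun_prop : Continuous fun z : ℂ ↦ 1 - ‖α‖ ^ 2 * ‖z‖ ^ 2).continuousOn.mul
    (hh'.norm.pow 2)).integrableOn_ball

end Dilation

theorem area_bounds_general (h g : ℂ → ℂ) (α : ℂ) (K' : ℝ → ℝ) (c : ℝ)
    (hα : ‖α‖ ≤ 1)
    (hh : DifferentiableOn ℂ h (ball (0 : ℂ) 1))
    (hdil : ∀ z ∈ ball (0 : ℂ) 1, deriv g z = α * z * deriv h z)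
    (hc : 0 < c)
    (hK'cont : ContinuousOn K' (Set.Ioo (-1 : ℝ) 1))
    (hK'pos : ∀ t ∈ Set.Ioo (-1 : ℝ) 1, c ≤ K' t)
    (hbound : ∀ z ∈ ball (0 : ℂ) 1,
      K' (-‖z‖) ≤ ‖deriv h z‖ ∧
      ‖deriv h z‖ ≤ K' (‖z‖))
    (r : ℝ) (hr0 : 0 < r) (hr1 : r < 1) :
    2 * π * ∫ t in (0 : ℝ)..r,
        t * (1 - ‖α‖ ^ 2 * t ^ 2) * (K' (-t)) ^ 2 ≤
      (∫ z in ball (0 : ℂ) r,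
        (‖deriv h z‖ ^ 2 - ‖deriv g z‖ ^ 2)) ∧
    (∫ z in ball (0 : ℂ) r,
        (‖deriv h z‖ ^ 2 - ‖deriv g z‖ ^ 2)) ≤
      2 * π * ∫ t in (0 : ℝ)..r,
        t * (1 - ‖α‖ ^ 2 * t ^ 2) * (K' t) ^ 2 := by
  have hball : ball (0 : ℂ) r ⊆ ball 0 1 := ball_subset_ball hr1.le
  have hint := integrableOn_ball_norm_deriv_sq_sub_norm_deriv_sq hh hdil hr1
  have hweight : ∀ z ∈ ball (0 : ℂ) r, 0 ≤ 1 - ‖α‖ ^ 2 * ‖z‖ ^ 2 := fun z hz ↦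
    one_sub_norm_sq_mul_sq_nonneg hα (norm_nonneg z) (mem_ball_zero_iff.1 (hball hz)).le
  have hlower : ∀ z ∈ ball (0 : ℂ) r, (1 - ‖α‖ ^ 2 * ‖z‖ ^ 2) * K' (-‖z‖) ^ 2 ≤
      ‖deriv h z‖ ^ 2 - ‖deriv g z‖ ^ 2 := by
    intro z hz
    have hz1 : ‖z‖ < 1 := mem_ball_zero_iff.1 (hball hz)
    have hK' : 0 ≤ K' (-‖z‖) := hc.le.trans (hK'pos _ ⟨by linarith, by linarith [norm_nonneg z]⟩)
    rw [norm_deriv_sq_sub_norm_deriv_sq_eq hdil (hball hz)]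
    gcongr
    exacts [hweight z hz, (hbound z (hball hz)).1]
  have hupper : ∀ z ∈ ball (0 : ℂ) r, ‖deriv h z‖ ^ 2 - ‖deriv g z‖ ^ 2 ≤
      (1 - ‖α‖ ^ 2 * ‖z‖ ^ 2) * K' ‖z‖ ^ 2 := by
    intro z hz
    rw [norm_deriv_sq_sub_norm_deriv_sq_eq hdil (hball hz)]
    gcongr
    exacts [hweight z hz, (hbound z (hball hz)).2]
  have hcont : ContinuousOn (fun t ↦ (1 - ‖α‖ ^ 2 * t ^ 2) * K' t ^ 2) (Set.Icc 0 r) :=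
    (by fun_prop : Continuous fun t : ℝ ↦ 1 - ‖α‖ ^ 2 * t ^ 2).continuousOn.mul
      ((hK'cont.mono (Set.Icc_subset_Ioo (by linarith) hr1)).pow 2)
  constructor
  · simpa only [mul_assoc] using le_integral_ball_of_comp_norm_le hr0.le hint
      (fun t ht ↦ mul_nonneg (one_sub_norm_sq_mul_sq_nonneg hα ht.1 (by linarith [ht.2]))
        (sq_nonneg _)) hlower
  · simpa only [mul_assoc] using integral_ball_le_of_le_comp_norm hr0.le hint hcont hupper

/-- Area bounds for the image of `𝔻_r` under the harmonic map `f = h + conj g`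
with dilation `g' = α z h'`, where `K'(-|z|) ≤ |h'(z)| ≤ K'(|z|)`. -/
theorem area_bounds (h g : ℂ → ℂ) (α : ℂ) (K' : ℝ → ℝ) (c : ℝ)
    (hα : ‖α‖ ≤ 1)
    (hh : DifferentiableOn ℂ h (ball (0 : ℂ) 1))
    (hg : DifferentiableOn ℂ g (ball (0 : ℂ) 1))
    (hdil : ∀ z ∈ ball (0 : ℂ) 1, deriv g z = α * z * deriv h z)
    (hc : 0 < c)
    (hK'cont : ContinuousOn K' (Set.Ioo (-1 : ℝ) 1))
    (hK'pos : ∀ t ∈ Set.Ioo (-1 : ℝ) 1, c ≤ K' t)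
    (hbound : ∀ z ∈ ball (0 : ℂ) 1,
      K' (-‖z‖) ≤ ‖deriv h z‖ ∧
      ‖deriv h z‖ ≤ K' (‖z‖))
    (r : ℝ) (hr0 : 0 < r) (hr1 : r < 1) :
    2 * π * ∫ t in (0 : ℝ)..r,
        t * (1 - ‖α‖ ^ 2 * t ^ 2) * (K' (-t)) ^ 2 ≤
      (∫ z in ball (0 : ℂ) r,
        (‖deriv h z‖ ^ 2 - ‖deriv g z‖ ^ 2)) ∧
    (∫ z in ball (0 : ℂ) r,
        (‖deriv h z‖ ^ 2 - ‖deriv g z‖ ^ 2)) ≤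
      2 * π * ∫ t in (0 : ℝ)..r,
        t * (1 - ‖α‖ ^ 2 * t ^ 2) * (K' t) ^ 2 :=
  area_bounds_general h g α K' c hα hh hdil hc hK'cont hK'pos hbound r hr0 hr1
end
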